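/- arXiv:1810.09072 — 2 statements merged into one kernel-verified Lean document; each statement's English description precedes it below -/
import Mathlib

section
/- There exists a function π : 2^ω → ω^ω such that for every r ∈ 2^ω, if f is an infinite partial function from ω to ω with f ⊆ π(r) (as a set of pairs), then r is uniquely determined by f; more precisely, if r, r' ∈ 2^ω and f is an infinite partial function with f ⊆ π(r) and f ⊆ π(r'), then r = r'. -/
/-!
Let `π r n` be a natural-number code of the first `n` values of `r`. The domain of an infinite
partial function is unbounded, so a partial function contained in `π r` reveals arbitrarily long
prefixes of `r`.
-/

def prefixCode {α : Type*} [Encodable α] (r : ℕ → α) (n : ℕ) : ℕ :=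
  Encodable.encode (List.ofFn fun i : Fin n => r i)

theorem apply_eq_of_prefixCode_eq {α : Type*} [Encodable α] {r r' : ℕ → α} {n i : ℕ}
    (h : prefixCode r n = prefixCode r' n) (hi : i < n) : r i = r' i := by
  have hlist := congrArg (·[i]?) (Encodable.encode_injective h)
  simpa [List.getElem?_ofFn, hi] using hlist

theorem eq_of_frequently_prefixCode_eq {α : Type*} [Encodable α] {r r' : ℕ → α}
    (h : ∀ i, ∃ n > i, prefixCode r n = prefixCode r' n) : r = r' := by
  funext i
  obtain ⟨n, hin, hn⟩ := h i
  exact apply_eq_of_prefixCode_eq hn hin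

theorem Set.Infinite.exists_fst_gt {s : Set (ℕ × ℕ)}
    (hfun : ∀ p ∈ s, ∀ q ∈ s, p.1 = q.1 → p.2 = q.2) (hinf : s.Infinite) (i : ℕ) :
    ∃ p ∈ s, i < p.1 := by
  have hinj : Set.InjOn Prod.fst s := fun p hp q hq h => Prod.ext h (hfun p hp q hq h)
  obtain ⟨_, ⟨p, hp, rfl⟩, hi⟩ := (hinf.image hinj).exists_gt i
  exact ⟨p, hp, hi⟩

/-- There is a function `π : 2^ω → ω^ω` such that any infinite partial function
contained in `π r` determines `r`. -/
theorem stmt0 :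
    ∃ π : (ℕ → Bool) → (ℕ → ℕ),
      ∀ r r' : ℕ → Bool, ∀ s : Set (ℕ × ℕ),
        (∀ p ∈ s, ∀ q ∈ s, p.1 = q.1 → p.2 = q.2) →
        s.Infinite →
        (∀ p ∈ s, π r p.1 = p.2) →
        (∀ p ∈ s, π r' p.1 = p.2) →
        r = r' := by
  refine ⟨prefixCode, fun r r' s hfun hinf hr hr' => eq_of_frequently_prefixCode_eq fun i => ?_⟩
  obtain ⟨p, hp, hi⟩ := hinf.exists_fst_gt hfun i
  exact ⟨p.1, hi, (hr p hp).trans (hr' p hp).symm⟩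
end

section
/- Under CH, there exists a universal function U : [ω₁]² → ω, i.e., for every F : [ω₁]² → ω there is an injective h : ω₁ → ω₁ with F(α,β) = U(h(α),h(β)) for all α ≠ β. -/
/-!
Under CH there are only `ℵ₁` codes, i.e. sequences `ℕ → ω₁ × ℕ` read as countable partial
functions `ω₁ ⇀ ℕ`, so `ω₁` can be labelled by codes `c δ` in such a way that every code labels
cofinally many `δ`. Put `U (α, δ) := (c δ) α` for `α < δ`. Given `F`, choose `h β` by transfinite
recursion: since `β` has only countably many predecessors and countable subsets of `ω₁` are
bounded, there is a `δ` above every `h α` (`α < β`) whose code is `h α ↦ F (α, β)`; let `h β` be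
such a `δ`.
-/

/-- The set of countable ordinals, i.e. ω₁. -/
abbrev Omega1 := {o : Ordinal.{0} // o < (Cardinal.aleph 1).ord}

open Cardinal Set Function

noncomputable section

theorem exists_strictMono_forall_lt_eq {ι κ V : Type*} [LinearOrder ι] [WellFoundedLT ι]
    [Preorder κ] [Nonempty κ] (U : κ → κ → V)
    (hext : ∀ β : ι, ∀ v : Iio β → κ, StrictMono v → ∀ w : Iio β → V,
      ∃ δ, ∀ a, v a < δ ∧ U (v a) δ = w a)
    (F : ι → ι → V) :
    ∃ h : ι → κ, StrictMono h ∧ ∀ ⦃α β⦄, α < β → U (h α) (h β) = F α β := by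
  let Good (β : ι) (v : ∀ α < β, κ) (δ : κ) : Prop :=
    ∀ α (hα : α < β), v α hα < δ ∧ U (v α hα) δ = F α β
  let h : ι → κ := WellFoundedLT.fix fun β v => Classical.epsilon (Good β v)
  have h_eq (β : ι) : h β = Classical.epsilon (Good β fun α _ => h α) :=
    WellFoundedLT.fix_eq _ β
  have h_good (β : ι) : Good β (fun α _ => h α) (h β) := by
    induction β using WellFoundedLT.induction with
    | _ β ih =>
      have hmono : StrictMono fun a : Iio β => h a := fun a b hab => (ih b b.2 a hab).1
      obtain ⟨δ, hδ⟩ := hext β _ hmono fun a => F a β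
      rw [h_eq β]
      exact Classical.epsilon_spec (p := Good β fun α _ => h α) ⟨δ, fun α hα => hδ ⟨α, hα⟩⟩
  exact ⟨h, fun α β hαβ => (h_good β α hαβ).1, fun α β hαβ => (h_good β α hαβ).2⟩

section Codes

variable {κ V : Type*} [Inhabited V] (c : κ → ℕ → κ × V)

/-- The code `c δ` read as a partial function `κ ⇀ V`, `(c δ n).1 ↦ (c δ n).2`, extended by
`default`; where two entries conflict, an arbitrary one wins. -/
def decode (δ α : κ) : V :=
  extend (fun n => (c δ n).1) (fun n => (c δ n).2) (fun _ => default) α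

variable [LinearOrder κ]

def codeFun (α β : κ) : V :=
  decode c (max α β) (min α β)

theorem codeFun_comm (α β : κ) : codeFun c α β = codeFun c β α := by
  rw [codeFun, codeFun, max_comm, min_comm]

theorem codeFun_of_lt {α δ : κ} (h : α < δ) : codeFun c α δ = decode c δ α := by
  rw [codeFun, max_eq_right h.le, min_eq_left h.le]

theorem exists_gt_codeFun_eq (hbdd : ∀ s : Set κ, s.Countable → BddAbove s)
    (hc : ∀ s γ, ∃ δ, γ < δ ∧ c δ = s) {A : Type*} [Countable A] {v : A → κ}
    (hv : Injective v) (w : A → V) :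
    ∃ δ, ∀ a, v a < δ ∧ codeFun c (v a) δ = w a := by
  obtain ⟨γ, hγ⟩ := hbdd (range v) (countable_range v)
  rcases isEmpty_or_nonempty A with _ | _
  · exact ⟨γ, isEmptyElim⟩
  obtain ⟨e, he⟩ := exists_surjective_nat A
  obtain ⟨δ, hγδ, hδ⟩ := hc (fun n => (v (e n), w (e n))) γ
  have hlt (a : A) : v a < δ := (hγ (mem_range_self a)).trans_lt hγδ
  have hfac : FactorsThrough (fun n => (c δ n).2) (fun n => (c δ n).1) := by
    intro m n hmn
    simp only [hδ] at hmn ⊢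
    rw [hv hmn]
  refine ⟨δ, fun a => ⟨hlt a, ?_⟩⟩
  obtain ⟨n, rfl⟩ := he a
  have hn : v (e n) = (c δ n).1 := by rw [hδ]
  rw [codeFun_of_lt c (hlt _), decode, hn, hfac.extend_apply, hδ]

end Codes

theorem exists_gt_snd_eq_of_equiv_prod {κ S : Type*} [LinearOrder κ]
    (hIic : ∀ γ : κ, (Iic γ).Countable) (hκ : ¬Countable κ) (e : κ ≃ κ × S) (s : S) (γ : κ) :
    ∃ δ, γ < δ ∧ (e δ).2 = s := by
  by_contra! hs
  have := (hIic γ).to_subtype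
  let f : κ → Iic γ := fun x => ⟨e.symm (x, s), not_lt.1 fun h => hs _ h (by simp)⟩
  have hf : Injective f := fun x y hxy =>
    congrArg Prod.fst (e.symm.injective (congrArg Subtype.val hxy))
  exact hκ hf.countable

instance : Nonempty Omega1 := ⟨⟨0, by simp [Ordinal.omega_pos]⟩⟩

theorem Omega1.mk_eq : #Omega1 = ℵ₁ := (mk_Iio_ordinal _).trans (by simp)

theorem Omega1.countable_Iio (β : Omega1) : (Iio β).Countable := by
  have : (Iio β.1).Countable := by
    rw [← le_aleph0_iff_set_countable, mk_Iio_ordinal, lift_le_aleph0, ← lt_aleph_one_iff,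
      ← lt_ord]
    exact β.2
  exact this.preimage Subtype.val_injective

theorem Omega1.countable_Iic (γ : Omega1) : (Iic γ).Countable := by
  rw [← Iio_insert]
  exact (countable_Iio γ).insert γ

theorem Omega1.bddAbove_of_countable {s : Set Omega1} (hs : s.Countable) : BddAbove s := by
  have := hs.to_subtype
  have hlt : ⨆ x : s, x.1.1 < (aleph 1).ord :=
    (Ordinal.iSup_lt_omega_one fun x => x.1.2.trans_eq (ord_aleph 1)).trans_eq (ord_aleph 1).symm
  exact ⟨⟨_, hlt⟩, fun x hx => Ordinal.le_iSup (fun x : s => x.1.1) ⟨x, hx⟩⟩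

theorem Omega1.not_countable : ¬Countable Omega1 := fun h => by
  have := mk_eq ▸ mk_le_aleph0 (α := Omega1)
  exact aleph0_lt_aleph_one.not_ge this

theorem Omega1.nonempty_equiv_prod_codes (hCH : Cardinal.continuum.{u} = ℵ₁) :
    Nonempty (Omega1 ≃ Omega1 × (ℕ → Omega1 × ℕ)) := by
  have hCH₀ : Cardinal.continuum.{0} = ℵ₁ := lift_injective.{u, 0} (by simpa using hCH)
  have hmk : #Omega1 = 𝔠 := by
    rw [mk_eq]
    simpa using (congrArg lift.{1} hCH₀).symm
  exact Cardinal.eq.1 (by simp [hmk])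

end

/-- Under CH there is a universal function `U : [ω₁]² → ω`. -/
theorem stmt7 (hCH : Cardinal.continuum = Cardinal.aleph 1) :
    ∃ U : Omega1 → Omega1 → ℕ, (∀ α β, U α β = U β α) ∧
      ∀ F : Omega1 → Omega1 → ℕ, (∀ α β, F α β = F β α) →
        ∃ h : Omega1 → Omega1, Function.Injective h ∧
          ∀ α β : Omega1, α ≠ β → F α β = U (h α) (h β) := by
  obtain ⟨e⟩ := Omega1.nonempty_equiv_prod_codes hCH
  let c : Omega1 → ℕ → Omega1 × ℕ := fun δ => (e δ).2
  have hc : ∀ s γ, ∃ δ, γ < δ ∧ c δ = s :=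
    exists_gt_snd_eq_of_equiv_prod Omega1.countable_Iic Omega1.not_countable e
  refine ⟨codeFun c, codeFun_comm c, fun F hF => ?_⟩
  obtain ⟨h, hmono, hh⟩ := exists_strictMono_forall_lt_eq (codeFun c)
    (fun β v hv w =>
      have := (Omega1.countable_Iio β).to_subtype
      exists_gt_codeFun_eq c (fun _ => Omega1.bddAbove_of_countable) hc hv.injective w) F
  refine ⟨h, hmono.injective, fun α β hne => ?_⟩
  rcases hne.lt_or_gt with hlt | hlt
  · exact (hh hlt).symm
  · rw [hF, codeFun_comm]
    exact (hh hlt).symm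
end
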